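/- Let A be a bounded operator on ℓ²(ℕ), P_m the projection onto the span of the first m basis vectors, γ = ‖A⁻¹‖⁻¹ = min{σ₁(A), σ₁(A*)} (with γ = 0 if A is not invertible), γ_m = min{σ₁(AP_m), σ₁(A*P_m)}, and γ_{m,n} = min{σ₁(P_nAP_m), σ₁(P_nA*P_m)}. Then: (i) γ_m decreases monotonically to γ as m → ∞; (ii) for each fixed m, γ_{m,n} increases monotonically to γ_m as n → ∞; hence lim_{m→∞} lim_{n→∞} γ_{m,n} = ‖A⁻¹‖⁻¹. -/

import Mathlib

/-! `σ₁(B)` on a subspace `E` is the infimum of `‖B ξ‖` over unit vectors `ξ ∈ E`, so it can only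
drop when `E` grows; since `⋃ Ran P_m` is dense, normalised truncations `P_m ξ / ‖P_m ξ‖`
approximate every unit vector `ξ`, whence `σ₁(A P_m) ↓ σ₁(A)`. For fixed `m`, `‖P_n B ξ‖`
increases to `‖B ξ‖`, by Dini's theorem uniformly on the compact unit sphere of `Ran P_m`,
whence `σ₁(P_n B P_m) ↑ σ₁(B P_m)`. Finally `min {σ₁(A), σ₁(A*)} = ‖A⁻¹‖⁻¹`: if both are
positive then `A` is bounded below and `A*` is injective, so `A` has closed dense range and is
invertible; and for invertible `A`, `σ₁(A) = ‖A⁻¹‖⁻¹ = ‖(A*)⁻¹‖⁻¹`. -/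

open Filter Topology

noncomputable section

/-- `ℓ²(ℕ)` over `ℂ`. -/
abbrev L2 : Type := lp (fun _ : ℕ => ℂ) 2

/-- The canonical orthonormal basis vectors of `ℓ²(ℕ)`. -/
def eVec (i : ℕ) : L2 := lp.single 2 i 1

/-- `Ran P_m`: the span of the first `m` canonical basis vectors. -/
def spanE (m : ℕ) : Submodule ℂ L2 := Submodule.span ℂ (eVec '' Set.Iio m)

/-- The orthogonal projection `P_n` onto the span of the first `n` basis vectors. -/
def Pproj (n : ℕ) : L2 →L[ℂ] L2 :=
  haveI : FiniteDimensional ℂ (spanE n) :=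
    FiniteDimensional.span_of_finite ℂ ((Set.finite_Iio n).image eVec)
  (spanE n).subtypeL.comp ((spanE n).orthogonalProjectionOnto)

/-- Injection modulus of `B` restricted to `E`. -/
def sigma1On (B : L2 →L[ℂ] L2) (E : Submodule ℂ L2) : ℝ :=
  sInf {r : ℝ | ∃ ξ ∈ E, ‖ξ‖ = 1 ∧ r = ‖B ξ‖}

/-- `γ = ‖A⁻¹‖⁻¹`, with the convention `γ = 0` when `A` is not invertible. -/
def gamInv (A : L2 →L[ℂ] L2) : ℝ := ‖Ring.inverse A‖⁻¹

/-- `γ_m = min{σ₁(A P_m), σ₁(A* P_m)}`. -/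
def gamM (A : L2 →L[ℂ] L2) (m : ℕ) : ℝ :=
  min (sigma1On A (spanE m)) (sigma1On (ContinuousLinearMap.adjoint A) (spanE m))

/-- `γ_{m,n} = min{σ₁(P_n A P_m), σ₁(P_n A* P_m)}`. -/
def gamMN (A : L2 →L[ℂ] L2) (m n : ℕ) : ℝ :=
  min (sigma1On ((Pproj n).comp A) (spanE m))
      (sigma1On ((Pproj n).comp (ContinuousLinearMap.adjoint A)) (spanE m))

instance (n : ℕ) : FiniteDimensional ℂ (spanE n) :=
  FiniteDimensional.span_of_finite ℂ ((Set.finite_Iio n).image eVec)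

lemma norm_eVec (i : ℕ) : ‖eVec i‖ = 1 := by
  simp [eVec]

lemma eVec_mem_spanE {i n : ℕ} (h : i < n) : eVec i ∈ spanE n :=
  Submodule.subset_span ⟨i, h, rfl⟩

lemma spanE_mono : Monotone spanE := fun _ _ h =>
  Submodule.span_mono (Set.image_mono (Set.Iio_subset_Iio h))

lemma exists_norm_eq_one_mem_spanE {m : ℕ} (hm : 0 < m) : ∃ ξ ∈ spanE m, ‖ξ‖ = 1 :=
  ⟨eVec 0, eVec_mem_spanE hm, norm_eVec 0⟩

lemma Pproj_eq_starProjection (n : ℕ) : Pproj n = (spanE n).starProjection := rfl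

lemma norm_Pproj_apply_le (n : ℕ) (x : L2) : ‖Pproj n x‖ ≤ ‖x‖ :=
  (spanE n).norm_starProjection_apply_le x

lemma monotone_norm_Pproj_apply (x : L2) : Monotone fun n => ‖Pproj n x‖ := by
  intro n n' h
  have hPP : Pproj n (Pproj n' x) = Pproj n x := by
    simp only [Pproj_eq_starProjection, ← ContinuousLinearMap.comp_apply,
      Submodule.starProjection_comp_starProjection_of_le (spanE_mono h)]
  calc ‖Pproj n x‖ = ‖Pproj n (Pproj n' x)‖ := by rw [hPP]
    _ ≤ ‖Pproj n' x‖ := norm_Pproj_apply_le n _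

lemma dense_iSup_spanE : ⊤ ≤ (⨆ n, spanE n).topologicalClosure := by
  rintro x -
  refine mem_closure_of_tendsto
    (lp.hasSum_single (E := fun _ : ℕ => ℂ) ENNReal.ofNat_ne_top x).tendsto_sum_nat
    (Eventually.of_forall fun n => Submodule.mem_iSup_of_mem n ?_)
  refine Submodule.sum_mem _ fun i hi => ?_
  have : lp.single 2 i (x i) = x i • eVec i := by
    rw [eVec, ← lp.single_smul, smul_eq_mul, mul_one]
  rw [this]
  exact Submodule.smul_mem _ _ (eVec_mem_spanE (Finset.mem_range.mp hi))

lemma tendsto_Pproj_apply (x : L2) : Tendsto (fun n => Pproj n x) atTop (𝓝 x) :=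
  Submodule.starProjection_tendsto_self spanE spanE_mono x dense_iSup_spanE

section sigma1On

variable {B B₁ B₂ : L2 →L[ℂ] L2} {E F : Submodule ℂ L2}

lemma sigma1On_nonneg : 0 ≤ sigma1On B E :=
  Real.sInf_nonneg fun _ ⟨_, _, _, hr⟩ => hr ▸ norm_nonneg _

lemma sigma1On_le_norm_apply {ξ : L2} (hξ : ξ ∈ E) (h1 : ‖ξ‖ = 1) : sigma1On B E ≤ ‖B ξ‖ :=
  csInf_le ⟨0, fun _ ⟨_, _, _, hr⟩ => hr ▸ norm_nonneg _⟩ ⟨ξ, hξ, h1, rfl⟩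

lemma le_sigma1On {c : ℝ} (hE : ∃ ξ ∈ E, ‖ξ‖ = 1) (h : ∀ ξ ∈ E, ‖ξ‖ = 1 → c ≤ ‖B ξ‖) :
    c ≤ sigma1On B E := by
  obtain ⟨ξ, hξ, h1⟩ := hE
  exact le_csInf ⟨_, ξ, hξ, h1, rfl⟩ fun _ ⟨η, hη, h1, hr⟩ => hr ▸ h η hη h1

lemma sigma1On_sub_le {ε : ℝ} (hε : 0 ≤ ε) (h : ∀ ξ ∈ E, ‖ξ‖ = 1 → ‖B₁ ξ‖ - ε ≤ ‖B₂ ξ‖) :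
    sigma1On B₁ E - ε ≤ sigma1On B₂ E := by
  by_cases hE : ∃ ξ ∈ E, ‖ξ‖ = 1
  · exact le_sigma1On hE fun ξ hξ h1 => (sub_le_sub_right (sigma1On_le_norm_apply hξ h1) ε).trans
      (h ξ hξ h1)
  · have hempty (B : L2 →L[ℂ] L2) : sigma1On B E = 0 := by
      have : {r : ℝ | ∃ ξ ∈ E, ‖ξ‖ = 1 ∧ r = ‖B ξ‖} = ∅ :=
        Set.eq_empty_of_forall_notMem fun _ ⟨ξ, hξ, h1, _⟩ => hE ⟨ξ, hξ, h1⟩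
      rw [sigma1On, this, Real.sInf_empty]
    rw [hempty, hempty]
    linarith

lemma sigma1On_mono (h : ∀ ξ ∈ E, ‖ξ‖ = 1 → ‖B₁ ξ‖ ≤ ‖B₂ ξ‖) : sigma1On B₁ E ≤ sigma1On B₂ E := by
  simpa using sigma1On_sub_le le_rfl fun ξ hξ h1 => by simpa using h ξ hξ h1

lemma sigma1On_anti (hEF : E ≤ F) (hE : ∃ ξ ∈ E, ‖ξ‖ = 1) : sigma1On B F ≤ sigma1On B E :=
  le_sigma1On hE fun _ hξ h1 => sigma1On_le_norm_apply (hEF hξ) h1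

lemma sigma1On_mul_norm_le {ξ : L2} (hξ : ξ ∈ E) : sigma1On B E * ‖ξ‖ ≤ ‖B ξ‖ := by
  rcases eq_or_ne ξ 0 with rfl | hξ0
  · simp
  have hn : ‖ξ‖ ≠ 0 := norm_ne_zero_iff.mpr hξ0
  have := sigma1On_le_norm_apply (B := B) (E.smul_of_tower_mem ‖ξ‖⁻¹ hξ)
    (by rw [norm_smul, norm_inv, norm_norm, inv_mul_cancel₀ hn])
  rw [B.map_smul_of_tower, norm_smul, norm_inv, norm_norm, le_inv_mul_iff₀ (by positivity)] at this
  linarith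

end sigma1On

open ContinuousLinearMap in
theorem ContinuousLinearMap.isUnit_of_antilipschitz_of_injective_adjoint {𝕜 H : Type*}
    [RCLike 𝕜] [NormedAddCommGroup H] [InnerProductSpace 𝕜 H] [CompleteSpace H] {T : H →L[𝕜] H}
    {c : NNReal}
    (hT : AntilipschitzWith c T) (hT' : Function.Injective (adjoint T)) : IsUnit T := by
  rw [isUnit_iff_bijective, bijective_iff_dense_range_and_antilipschitz]
  refine ⟨?_, c, hT⟩
  rw [Submodule.topologicalClosure_eq_top_iff, orthogonal_range]
  exact LinearMap.ker_eq_bot.mpr hT'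

lemma isUnit_of_sigma1On_top_pos {A : L2 →L[ℂ] L2} (hA : 0 < sigma1On A ⊤)
    (hA' : 0 < sigma1On (ContinuousLinearMap.adjoint A) ⊤) : IsUnit A := by
  refine ContinuousLinearMap.isUnit_of_antilipschitz_of_injective_adjoint
    (A.antilipschitz_of_bound (K := ⟨_, (inv_pos.mpr hA).le⟩) fun x => ?_) fun x y hxy => ?_
  · change ‖x‖ ≤ (sigma1On A ⊤)⁻¹ * ‖A x‖
    rw [inv_mul_eq_div, le_div_iff₀ hA, mul_comm]
    exact sigma1On_mul_norm_le Submodule.mem_top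
  · have := sigma1On_mul_norm_le (B := ContinuousLinearMap.adjoint A)
      (Submodule.mem_top (x := x - y))
    rw [map_sub, hxy, sub_self, norm_zero] at this
    exact sub_eq_zero.mp (norm_le_zero_iff.mp (nonpos_of_mul_nonpos_right this hA'))

lemma sigma1On_top_eq_gamInv {B : L2 →L[ℂ] L2} (hB : IsUnit B) : sigma1On B ⊤ = gamInv B := by
  set C := Ring.inverse B
  have hCB (x : L2) : C (B x) = x := by simpa using congr($(Ring.inverse_mul_cancel B hB) x)
  have hBC (y : L2) : B (C y) = y := by simpa using congr($(Ring.mul_inverse_cancel B hB) y)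
  have hbound (x : L2) : ‖x‖ ≤ ‖C‖ * ‖B x‖ := by simpa [hCB] using C.le_opNorm (B x)
  have hC : 0 < ‖C‖ := by
    by_contra! h
    have := hbound (eVec 0)
    rw [norm_eVec, h.antisymm (norm_nonneg C), zero_mul] at this
    norm_num at this
  have hge : ‖C‖⁻¹ ≤ sigma1On B ⊤ :=
    le_sigma1On ⟨eVec 0, Submodule.mem_top, norm_eVec 0⟩ fun ξ _ h1 => by
      rw [inv_le_iff_one_le_mul₀' hC, ← h1]; exact hbound ξ
  have hσ : 0 < sigma1On B ⊤ := (inv_pos.mpr hC).trans_le hge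
  have hle : ‖C‖ ≤ (sigma1On B ⊤)⁻¹ := C.opNorm_le_bound (inv_nonneg.mpr hσ.le) fun y => by
    rw [inv_mul_eq_div, le_div_iff₀ hσ, mul_comm]
    simpa [hBC] using sigma1On_mul_norm_le (B := B) (Submodule.mem_top (x := C y))
  exact le_antisymm ((le_inv_comm₀ hC hσ).mp hle) hge

lemma gamInv_adjoint (A : L2 →L[ℂ] L2) : gamInv (ContinuousLinearMap.adjoint A) = gamInv A := by
  rw [gamInv, gamInv, ← ContinuousLinearMap.star_eq_adjoint, Ring.inverse_star, norm_star]

lemma gamInv_eq_min_sigma1On_top (A : L2 →L[ℂ] L2) :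
    gamInv A = min (sigma1On A ⊤) (sigma1On (ContinuousLinearMap.adjoint A) ⊤) := by
  by_cases hA : IsUnit A
  · have hA' : IsUnit (ContinuousLinearMap.adjoint A) := by
      rw [← ContinuousLinearMap.star_eq_adjoint]; exact hA.star
    rw [sigma1On_top_eq_gamInv hA, sigma1On_top_eq_gamInv hA', gamInv_adjoint, min_self]
  · rw [gamInv, Ring.inverse_non_unit A hA, norm_zero, inv_zero, eq_comm]
    by_contra h
    have hpos := (le_min sigma1On_nonneg sigma1On_nonneg).lt_of_ne' h
    exact hA (isUnit_of_sigma1On_top_pos (hpos.trans_le (min_le_left _ _))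
      (hpos.trans_le (min_le_right _ _)))

lemma tendsto_sigma1On_spanE (B : L2 →L[ℂ] L2) :
    Tendsto (fun m => sigma1On B (spanE m)) atTop (𝓝 (sigma1On B ⊤)) := by
  refine tendsto_order.mpr ⟨fun a ha => ?_, fun a ha => ?_⟩
  · filter_upwards [eventually_gt_atTop 0] with m hm
    exact ha.trans_le (sigma1On_anti le_top (exists_norm_eq_one_mem_spanE hm))
  · have hne : {r : ℝ | ∃ ξ ∈ (⊤ : Submodule ℂ L2), ‖ξ‖ = 1 ∧ r = ‖B ξ‖}.Nonempty :=
      ⟨_, eVec 0, Submodule.mem_top, norm_eVec 0, rfl⟩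
    obtain ⟨_, ⟨ξ, -, hξ, rfl⟩, hξa⟩ := exists_lt_of_csInf_lt hne ha
    have hnorm : Tendsto (fun m => ‖Pproj m ξ‖) atTop (𝓝 1) := hξ ▸ (tendsto_Pproj_apply ξ).norm
    have hη : Tendsto (fun m => ‖Pproj m ξ‖⁻¹ • Pproj m ξ) atTop (𝓝 ξ) := by
      simpa using (hnorm.inv₀ one_ne_zero).smul (tendsto_Pproj_apply ξ)
    filter_upwards [((B.continuous.tendsto ξ).comp hη).norm.eventually_lt_const hξa,
      hnorm.eventually_ne one_ne_zero] with m hBη hm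
    refine lt_of_le_of_lt (sigma1On_le_norm_apply ((spanE m).smul_of_tower_mem _ ?_) ?_) hBη
    · rw [Pproj_eq_starProjection]; exact (spanE m).starProjection_apply_mem ξ
    · rw [norm_smul, norm_inv, norm_norm, inv_mul_cancel₀ hm]

lemma tendsto_sigma1On_Pproj_comp (B : L2 →L[ℂ] L2) (m : ℕ) :
    Tendsto (fun n => sigma1On ((Pproj n).comp B) (spanE m)) atTop
      (𝓝 (sigma1On B (spanE m))) := by
  have hunif : TendstoUniformlyOn (fun n (ξ : spanE m) => ‖Pproj n (B ξ)‖) (fun ξ => ‖B ξ‖) atTop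
      (Metric.sphere 0 1) :=
    Monotone.tendstoUniformlyOn_of_forall_tendsto (isCompact_sphere 0 1)
      (fun n => by fun_prop) (fun ξ _ => monotone_norm_Pproj_apply (B ξ)) (by fun_prop)
      (fun ξ _ => (tendsto_Pproj_apply (B ξ)).norm)
  rw [Metric.tendsto_nhds]
  intro ε hε
  filter_upwards [Metric.tendstoUniformlyOn_iff.mp hunif (ε / 2) (half_pos hε)] with n hn
  have hlow : sigma1On B (spanE m) - ε / 2 ≤ sigma1On ((Pproj n).comp B) (spanE m) :=
    sigma1On_sub_le (half_pos hε).le fun ξ hξ h1 => by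
      have := hn ⟨ξ, hξ⟩ (mem_sphere_zero_iff_norm.mpr h1)
      rw [Real.dist_eq, abs_lt] at this
      simp only [ContinuousLinearMap.comp_apply]
      linarith
  have hup : sigma1On ((Pproj n).comp B) (spanE m) ≤ sigma1On B (spanE m) :=
    sigma1On_mono fun ξ _ _ => norm_Pproj_apply_le n (B ξ)
  rw [Real.dist_eq, abs_lt]
  constructor <;> linarith

/-- (i) `γ_m` decreases monotonically to `γ = ‖A⁻¹‖⁻¹` as `m → ∞`;
(ii) for each fixed `m`, `γ_{m,n}` increases monotonically to `γ_m` as `n → ∞`;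
hence `lim_m lim_n γ_{m,n} = ‖A⁻¹‖⁻¹`. -/
theorem stmt_11 (A : L2 →L[ℂ] L2) :
    (∀ m : ℕ, 1 ≤ m → gamM A (m + 1) ≤ gamM A m) ∧
    (∀ m : ℕ, 1 ≤ m → gamInv A ≤ gamM A m) ∧
    Tendsto (gamM A) atTop (𝓝 (gamInv A)) ∧
    (∀ m : ℕ, Monotone (gamMN A m)) ∧
    (∀ m : ℕ, ∀ n : ℕ, gamMN A m n ≤ gamM A m) ∧
    (∀ m : ℕ, Tendsto (gamMN A m) atTop (𝓝 (gamM A m))) := by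
  refine ⟨fun m hm => ?_, fun m hm => ?_, ?_, fun m n n' hn => ?_, fun m n => ?_, fun m => ?_⟩
  · have hE := exists_norm_eq_one_mem_spanE hm
    exact min_le_min (sigma1On_anti (spanE_mono m.le_succ) hE)
      (sigma1On_anti (spanE_mono m.le_succ) hE)
  · have hE := exists_norm_eq_one_mem_spanE hm
    rw [gamInv_eq_min_sigma1On_top]
    exact min_le_min (sigma1On_anti le_top hE) (sigma1On_anti le_top hE)
  · rw [gamInv_eq_min_sigma1On_top]
    exact (tendsto_sigma1On_spanE A).min (tendsto_sigma1On_spanE (ContinuousLinearMap.adjoint A))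
  · exact min_le_min (sigma1On_mono fun ξ _ _ => monotone_norm_Pproj_apply (A ξ) hn)
      (sigma1On_mono fun ξ _ _ => monotone_norm_Pproj_apply (ContinuousLinearMap.adjoint A ξ) hn)
  · exact min_le_min (sigma1On_mono fun ξ _ _ => norm_Pproj_apply_le n (A ξ))
      (sigma1On_mono fun ξ _ _ => norm_Pproj_apply_le n (ContinuousLinearMap.adjoint A ξ))
  · exact (tendsto_sigma1On_Pproj_comp A m).min
      (tendsto_sigma1On_Pproj_comp (ContinuousLinearMap.adjoint A) m)

end
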